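/- arXiv:2509.12635 — 8 statements merged into one kernel-verified Lean document; each statement's English description precedes it below -/
import Mathlib

section
/- For all μ0, ν0 ∈ ℝ, every ε > 0, and all reals λ, Λ > 1, there exists θ* ∈ (0,1) such that for every θ0 ∈ (0,θ*) there exists D0 with the property that for every even integer D ≥ D0: | μ0·(C_D(λ) − C_D(Λ)) + ν0·(S_D(λ) − S_D(Λ)) | < ε. -/
open Real Filter Finset

/-- Averaged RoPE cosine sum: `C_D(λ) = (1/D) Σ_{d=0}^{D/2-1} cos(2πλ θ0^{2d/D})`. -/
noncomputable def ropeC (D : ℕ) (θ0 lam : ℝ) : ℝ :=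
  (1 / (D : ℝ)) * ∑ d ∈ Finset.range (D / 2),
    Real.cos (2 * Real.pi * lam * θ0 ^ ((2 * (d : ℝ)) / (D : ℝ)))

/-- Averaged RoPE sine sum: `S_D(λ) = (1/D) Σ_{d=0}^{D/2-1} sin(2πλ θ0^{2d/D})`. -/
noncomputable def ropeS (D : ℕ) (θ0 lam : ℝ) : ℝ :=
  (1 / (D : ℝ)) * ∑ d ∈ Finset.range (D / 2),
    Real.sin (2 * Real.pi * lam * θ0 ^ ((2 * (d : ℝ)) / (D : ℝ)))


lemma myabs_cos_sub_cos_le (a b : ℝ) : |Real.cos a - Real.cos b| ≤ |a - b| := by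
  rw [Real.cos_sub_cos]
  have h1 : |Real.sin ((a+b)/2)| ≤ 1 := Real.abs_sin_le_one _
  have h2 : |Real.sin ((a-b)/2)| ≤ |(a-b)/2| := Real.abs_sin_le_abs
  have h3 : |(a-b)/2| = |a - b| / 2 := by rw [abs_div]; norm_num
  have h4 : |(-2) * Real.sin ((a+b)/2) * Real.sin ((a-b)/2)|
      = 2 * |Real.sin ((a+b)/2)| * |Real.sin ((a-b)/2)| := by
    rw [abs_mul, abs_mul]; norm_num
  rw [h4]
  nlinarith [abs_nonneg (Real.sin ((a-b)/2)), abs_nonneg (Real.sin ((a+b)/2))]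

lemma myabs_sin_sub_sin_le (a b : ℝ) : |Real.sin a - Real.sin b| ≤ |a - b| := by
  rw [Real.sin_sub_sin]
  have h1 : |Real.cos ((a+b)/2)| ≤ 1 := Real.abs_cos_le_one _
  have h2 : |Real.sin ((a-b)/2)| ≤ |(a-b)/2| := Real.abs_sin_le_abs
  have h3 : |(a-b)/2| = |a - b| / 2 := by rw [abs_div]; norm_num
  have h4 : |2 * Real.sin ((a-b)/2) * Real.cos ((a+b)/2)|
      = 2 * |Real.sin ((a-b)/2)| * |Real.cos ((a+b)/2)| := by
    rw [abs_mul, abs_mul]; norm_num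
  rw [h4]
  nlinarith [abs_nonneg (Real.sin ((a-b)/2)), abs_nonneg (Real.cos ((a+b)/2))]

set_option maxHeartbeats 1000000 in
/-- Theorem 2.4: the distance-bias gap can be made arbitrarily small. -/
theorem stmt2 (μ0 ν0 : ℝ) (ε : ℝ) (hε : 0 < ε) (lam Λ : ℝ) (hlam : 1 < lam) (hΛ : 1 < Λ) :
    ∃ θstar ∈ Set.Ioo (0 : ℝ) 1, ∀ θ0 ∈ Set.Ioo (0 : ℝ) θstar,
      ∃ D0 : ℕ, ∀ D : ℕ, Even D → D0 ≤ D →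
        |μ0 * (ropeC D θ0 lam - ropeC D θ0 Λ) +
            ν0 * (ropeS D θ0 lam - ropeS D θ0 Λ)| < ε := by
  set K0 : ℝ := (|μ0| + |ν0|) * (2 * Real.pi * |lam - Λ|) with hK0
  have hK0nn : 0 ≤ K0 := by positivity
  set K : ℝ := K0 + 1 with hK
  have hKpos : 0 < K := by positivity
  set c : ℝ := K * Real.exp 1 / ε + 1 with hc
  have hcpos : 0 < c := by positivity
  refine ⟨Real.exp (-c), ⟨Real.exp_pos _, by
    rw [Real.exp_lt_one_iff]; linarith⟩, ?_⟩
  rintro θ0 ⟨hθ0pos, hθ0lt⟩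
  have hθ0lt1 : θ0 < 1 := lt_trans hθ0lt (by rw [Real.exp_lt_one_iff]; linarith)
  set L : ℝ := -Real.log θ0 with hL
  have hLgt : c < L := by
    have := Real.log_lt_log hθ0pos hθ0lt
    rw [Real.log_exp] at this
    rw [hL]; linarith
  have hLpos : 0 < L := lt_trans hcpos hLgt
  refine ⟨⌈2 * L⌉₊ + 2, ?_⟩
  intro D hEven hD0le
  have hD2 : 2 ≤ D := le_trans (Nat.le_add_left 2 _) hD0le
  have hDpos : (0:ℝ) < (D:ℝ) := by exact_mod_cast Nat.lt_of_lt_of_le (by norm_num) hD2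
  have h2L : 2 * L ≤ (D:ℝ) := by
    calc 2 * L ≤ (⌈2*L⌉₊ : ℝ) := Nat.le_ceil _
      _ ≤ (D:ℝ) := by exact_mod_cast le_trans (Nat.le_add_right _ 2) hD0le
  set r : ℝ := θ0 ^ ((2:ℝ)/(D:ℝ)) with hr
  have hrpos : 0 < r := Real.rpow_pos_of_pos hθ0pos _
  have hrlt1 : r < 1 := Real.rpow_lt_one hθ0pos.le hθ0lt1 (by positivity)
  have hx : ∀ d : ℕ, θ0 ^ ((2 * (d:ℝ)) / (D:ℝ)) = r ^ d := by
    intro d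
    rw [hr, ← Real.rpow_natCast (θ0 ^ ((2:ℝ)/(D:ℝ))) d, ← Real.rpow_mul hθ0pos.le]
    congr 1; ring
  -- rewrite the expression as a single averaged sum
  have hsplit : ∑ d ∈ Finset.range (D/2),
          (μ0 * (Real.cos (2 * Real.pi * lam * θ0 ^ ((2 * (d:ℝ)) / (D:ℝ)))
                 - Real.cos (2 * Real.pi * Λ * θ0 ^ ((2 * (d:ℝ)) / (D:ℝ))))
           + ν0 * (Real.sin (2 * Real.pi * lam * θ0 ^ ((2 * (d:ℝ)) / (D:ℝ)))
                 - Real.sin (2 * Real.pi * Λ * θ0 ^ ((2 * (d:ℝ)) / (D:ℝ)))))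
      = μ0 * ((∑ d ∈ Finset.range (D/2), Real.cos (2 * Real.pi * lam * θ0 ^ ((2 * (d:ℝ)) / (D:ℝ))))
              - ∑ d ∈ Finset.range (D/2), Real.cos (2 * Real.pi * Λ * θ0 ^ ((2 * (d:ℝ)) / (D:ℝ))))
        + ν0 * ((∑ d ∈ Finset.range (D/2), Real.sin (2 * Real.pi * lam * θ0 ^ ((2 * (d:ℝ)) / (D:ℝ))))
              - ∑ d ∈ Finset.range (D/2), Real.sin (2 * Real.pi * Λ * θ0 ^ ((2 * (d:ℝ)) / (D:ℝ)))) := by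
    rw [Finset.sum_add_distrib, ← Finset.mul_sum, ← Finset.mul_sum,
      Finset.sum_sub_distrib, Finset.sum_sub_distrib]
  have hrw : μ0 * (ropeC D θ0 lam - ropeC D θ0 Λ) + ν0 * (ropeS D θ0 lam - ropeS D θ0 Λ)
      = (1/(D:ℝ)) * ∑ d ∈ Finset.range (D/2),
          (μ0 * (Real.cos (2 * Real.pi * lam * θ0 ^ ((2 * (d:ℝ)) / (D:ℝ)))
                 - Real.cos (2 * Real.pi * Λ * θ0 ^ ((2 * (d:ℝ)) / (D:ℝ))))
           + ν0 * (Real.sin (2 * Real.pi * lam * θ0 ^ ((2 * (d:ℝ)) / (D:ℝ)))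
                 - Real.sin (2 * Real.pi * Λ * θ0 ^ ((2 * (d:ℝ)) / (D:ℝ))))) := by
    rw [hsplit]
    simp only [ropeC, ropeS]
    ring
  -- per-term bound
  have hterm : ∀ d ∈ Finset.range (D/2),
      |μ0 * (Real.cos (2 * Real.pi * lam * θ0 ^ ((2 * (d:ℝ)) / (D:ℝ)))
                 - Real.cos (2 * Real.pi * Λ * θ0 ^ ((2 * (d:ℝ)) / (D:ℝ))))
           + ν0 * (Real.sin (2 * Real.pi * lam * θ0 ^ ((2 * (d:ℝ)) / (D:ℝ)))
                 - Real.sin (2 * Real.pi * Λ * θ0 ^ ((2 * (d:ℝ)) / (D:ℝ))))| ≤ K0 * r ^ d := by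
    intro d _
    set t : ℝ := θ0 ^ ((2 * (d:ℝ)) / (D:ℝ)) with ht
    have htnn : 0 ≤ t := Real.rpow_nonneg hθ0pos.le _
    have htr : t = r ^ d := by rw [ht]; exact hx d
    have habdiff : |2 * Real.pi * lam * t - 2 * Real.pi * Λ * t|
        = 2 * Real.pi * |lam - Λ| * t := by
      have he : 2 * Real.pi * lam * t - 2 * Real.pi * Λ * t
          = (2 * Real.pi * t) * (lam - Λ) := by ring
      rw [he, abs_mul, abs_of_nonneg (by positivity : (0:ℝ) ≤ 2 * Real.pi * t)]
      ring
    have hcos := myabs_cos_sub_cos_le (2 * Real.pi * lam * t) (2 * Real.pi * Λ * t)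
    have hsin := myabs_sin_sub_sin_le (2 * Real.pi * lam * t) (2 * Real.pi * Λ * t)
    rw [habdiff] at hcos hsin
    have hstep : |μ0 * (Real.cos (2 * Real.pi * lam * t) - Real.cos (2 * Real.pi * Λ * t))
           + ν0 * (Real.sin (2 * Real.pi * lam * t) - Real.sin (2 * Real.pi * Λ * t))|
        ≤ |μ0| * (2 * Real.pi * |lam - Λ| * t) + |ν0| * (2 * Real.pi * |lam - Λ| * t) := by
      refine le_trans (abs_add_le _ _) ?_
      rw [abs_mul, abs_mul]
      gcongr
    refine le_trans hstep (le_of_eq ?_)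
    rw [htr, hK0]
    ring
  -- geometric sum bound
  have h1rpos : 0 < 1 - r := by linarith
  have hgeom : ∑ d ∈ Finset.range (D/2), r ^ d ≤ 1 / (1 - r) := by
    rw [geom_sum_eq (ne_of_lt hrlt1)]
    have hpow : 0 ≤ r ^ (D/2) := pow_nonneg hrpos.le _
    have heq : (r ^ (D/2) - 1) / (r - 1) = (1 - r ^ (D/2)) / (1 - r) := by
      rw [div_eq_div_iff (by linarith) (by linarith)]; ring
    rw [heq]
    gcongr <;> linarith
  -- lower bound for 1 - r
  set xq : ℝ := 2 * L / (D:ℝ) with hxq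
  have hxqpos : 0 < xq := by rw [hxq]; positivity
  have hxqle1 : xq ≤ 1 := by rw [hxq, div_le_one hDpos]; exact h2L
  have hreq : r = Real.exp (-xq) := by
    rw [hr, Real.rpow_def_of_pos hθ0pos]
    congr 1
    rw [hxq, hL]
    field_simp
  have hexp1 : Real.exp (-1) ≤ Real.exp (-xq) := Real.exp_le_exp.mpr (by linarith)
  have hmain : xq * Real.exp (-xq) ≤ 1 - r := by
    rw [hreq]
    have h1 := Real.add_one_le_exp xq
    have h2 : Real.exp (-xq) * Real.exp xq = 1 := by rw [← Real.exp_add]; simp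
    nlinarith [Real.exp_pos (-xq), Real.exp_pos xq]
  have hlow : 0 < xq * Real.exp (-1) := by positivity
  have h1rge : xq * Real.exp (-1) ≤ 1 - r :=
    le_trans (mul_le_mul_of_nonneg_left hexp1 hxqpos.le) hmain
  have hinv : 1 / (1 - r) ≤ 1 / (xq * Real.exp (-1)) :=
    one_div_le_one_div_of_le hlow h1rge
  -- put it together
  rw [hrw, abs_mul, abs_of_nonneg (by positivity : (0:ℝ) ≤ 1/(D:ℝ))]
  have hsum1 := Finset.abs_sum_le_sum_abs
    (fun d : ℕ => μ0 * (Real.cos (2 * Real.pi * lam * θ0 ^ ((2 * (d:ℝ)) / (D:ℝ)))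
                 - Real.cos (2 * Real.pi * Λ * θ0 ^ ((2 * (d:ℝ)) / (D:ℝ))))
           + ν0 * (Real.sin (2 * Real.pi * lam * θ0 ^ ((2 * (d:ℝ)) / (D:ℝ)))
                 - Real.sin (2 * Real.pi * Λ * θ0 ^ ((2 * (d:ℝ)) / (D:ℝ))))) (Finset.range (D/2))
  have hsum2 := Finset.sum_le_sum hterm
  have hsum3 : ∑ d ∈ Finset.range (D/2), K0 * r ^ d
      = K0 * ∑ d ∈ Finset.range (D/2), r ^ d := by rw [Finset.mul_sum]
  have habs_le : |∑ d ∈ Finset.range (D/2),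
          (μ0 * (Real.cos (2 * Real.pi * lam * θ0 ^ ((2 * (d:ℝ)) / (D:ℝ)))
                 - Real.cos (2 * Real.pi * Λ * θ0 ^ ((2 * (d:ℝ)) / (D:ℝ))))
           + ν0 * (Real.sin (2 * Real.pi * lam * θ0 ^ ((2 * (d:ℝ)) / (D:ℝ)))
                 - Real.sin (2 * Real.pi * Λ * θ0 ^ ((2 * (d:ℝ)) / (D:ℝ)))))|
      ≤ K0 * (1 / (xq * Real.exp (-1))) := by
    refine le_trans hsum1 (le_trans hsum2 ?_)
    rw [hsum3]
    exact mul_le_mul_of_nonneg_left (le_trans hgeom hinv) hK0nn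
  have hchain : (1/(D:ℝ)) * |∑ d ∈ Finset.range (D/2),
          (μ0 * (Real.cos (2 * Real.pi * lam * θ0 ^ ((2 * (d:ℝ)) / (D:ℝ)))
                 - Real.cos (2 * Real.pi * Λ * θ0 ^ ((2 * (d:ℝ)) / (D:ℝ))))
           + ν0 * (Real.sin (2 * Real.pi * lam * θ0 ^ ((2 * (d:ℝ)) / (D:ℝ)))
                 - Real.sin (2 * Real.pi * Λ * θ0 ^ ((2 * (d:ℝ)) / (D:ℝ)))))|
      ≤ (1/(D:ℝ)) * (K0 * (1 / (xq * Real.exp (-1)))) :=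
    mul_le_mul_of_nonneg_left habs_le (by positivity)
  refine lt_of_le_of_lt hchain ?_
  have hval : (1/(D:ℝ)) * (K0 * (1 / (xq * Real.exp (-1)))) = K0 * Real.exp 1 / (2 * L) := by
    rw [hxq, Real.exp_neg]
    have hD0 : (D:ℝ) ≠ 0 := ne_of_gt hDpos
    have hL0 : L ≠ 0 := ne_of_gt hLpos
    have he0 : Real.exp 1 ≠ 0 := ne_of_gt (Real.exp_pos 1)
    field_simp
  rw [hval]
  -- final numeric estimate
  have hKe : K * Real.exp 1 < (L - 1) * ε := by
    have h' : K * Real.exp 1 / ε < L - 1 := by rw [hc] at hLgt; linarith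
    exact (div_lt_iff₀ hε).mp h'
  rw [div_lt_iff₀ (by positivity : (0:ℝ) < 2 * L)]
  have hK0K : K0 ≤ K := by rw [hK]; linarith
  have heps : Real.exp 1 > 0 := Real.exp_pos 1
  nlinarith [mul_le_mul_of_nonneg_right hK0K heps.le]
end

section
/- Let θ0 ∈ (0, 1/10), let D be an even positive integer with D > 4·|log θ0|, let λ > 1 be real, and let α ∈ (0,1). Then | C_D(λ) − (1/2)·∫_0^1 cos(2πλ·θ0^x) dx | ≤ α + 4πλ·θ0^α/D. -/
open Real Filter Finset

lemma myCosLip (x y : ℝ) : |Real.cos x - Real.cos y| ≤ |x - y| := by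
  rw [Real.cos_sub_cos]
  have h1 : |Real.sin ((x + y) / 2)| ≤ 1 := Real.abs_sin_le_one _
  have h2 : |Real.sin ((x - y) / 2)| ≤ |(x - y) / 2| := Real.abs_sin_le_abs
  calc |(-2) * Real.sin ((x + y) / 2) * Real.sin ((x - y) / 2)|
      = 2 * |Real.sin ((x + y) / 2)| * |Real.sin ((x - y) / 2)| := by
        rw [abs_mul, abs_mul]; norm_num
    _ ≤ 2 * 1 * |(x - y) / 2| := by gcongr
    _ = |x - y| := by rw [abs_div, abs_two]; ring

lemma myRpowDecay {θ0 : ℝ} (h0 : 0 < θ0) {a x : ℝ} (hax : a ≤ x) :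
    θ0 ^ a - θ0 ^ x ≤ (-Real.log θ0) * θ0 ^ a * (x - a) := by
  have h1 : θ0 ^ x = θ0 ^ a * θ0 ^ (x - a) := by
    rw [← Real.rpow_add h0]; ring_nf
  have h2 : 1 + Real.log θ0 * (x - a) ≤ θ0 ^ (x - a) := by
    rw [Real.rpow_def_of_pos h0]
    linarith [Real.add_one_le_exp (Real.log θ0 * (x - a))]
  nlinarith [Real.rpow_pos_of_pos h0 a]

lemma myCont {θ0 lam : ℝ} (h0 : 0 < θ0) :
    Continuous fun x : ℝ => Real.cos (2 * Real.pi * lam * θ0 ^ x) := by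
  have hc : Continuous fun x : ℝ => θ0 ^ x := by
    simp only [Real.rpow_def_of_pos h0]
    exact Real.continuous_exp.comp (continuous_const.mul continuous_id)
  exact Real.continuous_cos.comp (continuous_const.mul hc)

lemma myIntervalErr {θ0 lam : ℝ} (h0 : 0 < θ0) (h1 : θ0 < 1) (hlam : 0 < lam)
    {a b : ℝ} (hab : a ≤ b) :
    |(b - a) * Real.cos (2 * Real.pi * lam * θ0 ^ a)
        - ∫ x in a..b, Real.cos (2 * Real.pi * lam * θ0 ^ x)|
      ≤ Real.pi * lam * (-Real.log θ0) * θ0 ^ a * (b - a) ^ 2 := by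
  set f : ℝ → ℝ := fun x => Real.cos (2 * Real.pi * lam * θ0 ^ x) with hfdef
  have hc : Continuous f := myCont h0
  have hint : IntervalIntegrable f MeasureTheory.volume a b := hc.intervalIntegrable _ _
  have hlog : Real.log θ0 < 0 := Real.log_neg h0 h1
  set C : ℝ := 2 * Real.pi * lam * (-Real.log θ0) * θ0 ^ a with hC
  have hCpos : 0 ≤ C := by
    have h2 := Real.rpow_pos_of_pos h0 a
    have := Real.pi_pos
    have hl : (0:ℝ) < -Real.log θ0 := by linarith
    rw [hC]
    exact (mul_pos (mul_pos (by positivity : (0:ℝ) < 2 * Real.pi * lam) hl) h2).le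
  have hpoint : ∀ x ∈ Set.Icc a b, |f a - f x| ≤ C * (x - a) := by
    intro x hx
    have hax : a ≤ x := hx.1
    have hth : θ0 ^ x ≤ θ0 ^ a := Real.rpow_le_rpow_of_exponent_ge h0 h1.le hax
    have hpl : (0:ℝ) < 2 * Real.pi * lam := by positivity
    calc |f a - f x| ≤ |2 * Real.pi * lam * θ0 ^ a - 2 * Real.pi * lam * θ0 ^ x| :=
          myCosLip _ _
      _ = 2 * Real.pi * lam * (θ0 ^ a - θ0 ^ x) := by
          rw [abs_of_nonneg (by nlinarith)]; ring
      _ ≤ 2 * Real.pi * lam * ((-Real.log θ0) * θ0 ^ a * (x - a)) := by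
          exact mul_le_mul_of_nonneg_left (myRpowDecay h0 hax) hpl.le
      _ = C * (x - a) := by rw [hC]; ring
  have key : (b - a) * f a - ∫ x in a..b, f x = ∫ x in a..b, (f a - f x) := by
    rw [intervalIntegral.integral_sub (intervalIntegrable_const) hint,
        intervalIntegral.integral_const]
    simp [smul_eq_mul]
  rw [key]
  have h2 : |∫ x in a..b, (f a - f x)| ≤ ∫ x in a..b, |f a - f x| :=
    intervalIntegral.abs_integral_le_integral_abs hab
  have h3 : (∫ x in a..b, |f a - f x|) ≤ ∫ x in a..b, C * (x - a) := by
    apply intervalIntegral.integral_mono_on hab _ _ hpoint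
    · exact (continuous_const.sub hc).abs.intervalIntegrable _ _
    · exact (continuous_const.mul (continuous_id.sub continuous_const)).intervalIntegrable _ _
  have h4 : (∫ x in a..b, C * (x - a)) = C * ((b - a) ^ 2 / 2) := by
    rw [intervalIntegral.integral_const_mul]
    have h5 : (∫ x in a..b, (x - a)) = (b ^ 2 - a ^ 2) / 2 - (b - a) * a := by
      have hid : IntervalIntegrable (fun x : ℝ => x) MeasureTheory.volume a b :=
        Continuous.intervalIntegrable (by continuity) a b
      rw [intervalIntegral.integral_sub hid intervalIntegrable_const, integral_id,
          intervalIntegral.integral_const]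
      simp [smul_eq_mul]
    rw [h5]; ring
  calc |∫ x in a..b, (f a - f x)| ≤ C * ((b - a) ^ 2 / 2) := h2.trans (h3.trans_eq h4)
    _ ≤ Real.pi * lam * (-Real.log θ0) * θ0 ^ a * (b - a) ^ 2 := by rw [hC]; nlinarith

lemma myTrivErr (θ0 lam : ℝ) {a b : ℝ} (hab : a ≤ b) :
    |(b - a) * Real.cos (2 * Real.pi * lam * θ0 ^ a)
      - ∫ x in a..b, Real.cos (2 * Real.pi * lam * θ0 ^ x)| ≤ 2 * (b - a) := by
  have hB : |∫ x in a..b, Real.cos (2 * Real.pi * lam * θ0 ^ x)| ≤ 1 * |b - a| := by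
    have hbd := intervalIntegral.norm_integral_le_of_norm_le_const
      (C := 1) (f := fun x : ℝ => Real.cos (2 * Real.pi * lam * θ0 ^ x)) (a := a) (b := b)
      (fun x _ => by
        simp only [Real.norm_eq_abs]
        exact Real.abs_cos_le_one _)
    rw [Real.norm_eq_abs] at hbd
    exact hbd
  rw [abs_of_nonneg (by linarith : (0:ℝ) ≤ b - a)] at hB
  have hA : |(b - a) * Real.cos (2 * Real.pi * lam * θ0 ^ a)| ≤ (b - a) := by
    rw [abs_mul, abs_of_nonneg (by linarith : (0:ℝ) ≤ b - a)]
    have h := Real.abs_cos_le_one (2 * Real.pi * lam * θ0 ^ a)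
    nlinarith [abs_nonneg (Real.cos (2 * Real.pi * lam * θ0 ^ a))]
  calc |(b - a) * Real.cos (2 * Real.pi * lam * θ0 ^ a)
        - ∫ x in a..b, Real.cos (2 * Real.pi * lam * θ0 ^ x)|
      ≤ |(b - a) * Real.cos (2 * Real.pi * lam * θ0 ^ a)|
        + |∫ x in a..b, Real.cos (2 * Real.pi * lam * θ0 ^ x)| := abs_sub _ _
    _ ≤ (b - a) + 1 * (b - a) := add_le_add hA hB
    _ = 2 * (b - a) := by ring
noncomputable def myTerm (θ0 lam : ℝ) (N : ℕ) (d : ℕ) : ℝ :=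
  (1/(N:ℝ)) * Real.cos (2 * Real.pi * lam * θ0 ^ ((d:ℝ)/N))
    - ∫ x in ((d:ℝ)/N)..(((d:ℝ)+1)/N), Real.cos (2 * Real.pi * lam * θ0 ^ x)

set_option maxHeartbeats 2000000 in
/-- Riemann-sum approximation estimate for the cosine sum (`|Δ/2| ≤ ε(D; λ, θ0, α)`
in the proof of Lemma D.1). -/
theorem stmt8 (θ0 : ℝ) (hθ0 : θ0 ∈ Set.Ioo (0 : ℝ) (1 / 10))
    (D : ℕ) (hDeven : Even D) (hD : (D : ℝ) > 4 * |Real.log θ0|)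
    (lam : ℝ) (hlam : 1 < lam) (α : ℝ) (hα : α ∈ Set.Ioo (0 : ℝ) 1) :
    |ropeC D θ0 lam - (1 / 2) * ∫ x in (0 : ℝ)..1, Real.cos (2 * Real.pi * lam * θ0 ^ x)|
      ≤ α + 4 * Real.pi * lam * θ0 ^ α / D := by
  obtain ⟨h0, h10⟩ := hθ0
  obtain ⟨hα0, hα1⟩ := hα
  have h1 : θ0 < 1 := by linarith
  have hlam0 : (0:ℝ) < lam := by linarith
  have hlog : Real.log θ0 < 0 := Real.log_neg h0 h1
  set L : ℝ := -Real.log θ0 with hLdef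
  have hL : 0 < L := by rw [hLdef]; linarith
  have habs : |Real.log θ0| = L := abs_of_neg hlog
  rw [habs] at hD
  set N : ℕ := D / 2 with hNdef
  have hN2 : N * 2 = D := Nat.div_mul_cancel hDeven.two_dvd
  have hDR : (D : ℝ) = 2 * N := by rw [← hN2]; push_cast; ring
  have hDpos : (0:ℝ) < D := lt_trans (by positivity) hD
  have hNpos : (0:ℝ) < N := by rw [hDR] at hDpos; linarith
  have hNne : (N:ℝ) ≠ 0 := ne_of_gt hNpos
  have hθα : 0 < θ0 ^ α := Real.rpow_pos_of_pos h0 α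
  have hc : Continuous fun x : ℝ => Real.cos (2 * Real.pi * lam * θ0 ^ x) := myCont h0
  -- step 1 : rewrite ropeC
  have hrope : ropeC D θ0 lam = (1 / (2 * (N:ℝ))) * ∑ d ∈ Finset.range N,
      Real.cos (2 * Real.pi * lam * θ0 ^ ((d:ℝ) / N)) := by
    have hexp : ∀ d : ℕ, (2 * (d:ℝ)) / (2 * (N:ℝ)) = (d:ℝ) / N := fun d =>
      mul_div_mul_left _ _ two_ne_zero
    unfold ropeC
    rw [← hNdef, hDR, Finset.sum_congr rfl (fun d _ => by rw [hexp d])]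
  -- step 2 : split the integral
  have hsplit : (∫ x in (0:ℝ)..1, Real.cos (2 * Real.pi * lam * θ0 ^ x))
      = ∑ d ∈ Finset.range N,
          ∫ x in ((d:ℝ)/N)..(((d:ℝ)+1)/N), Real.cos (2 * Real.pi * lam * θ0 ^ x) := by
    have h := intervalIntegral.sum_integral_adjacent_intervals
      (a := fun k : ℕ => (k:ℝ)/N) (n := N) (μ := MeasureTheory.volume)
      (f := fun x : ℝ => Real.cos (2 * Real.pi * lam * θ0 ^ x))
      (fun k _ => hc.intervalIntegrable _ _)
    simp only [Nat.cast_add, Nat.cast_one] at h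
    rw [h, Nat.cast_zero, zero_div, div_self hNne]
  -- decomposition
  have hdiff : ropeC D θ0 lam
        - (1/2) * ∫ x in (0:ℝ)..1, Real.cos (2 * Real.pi * lam * θ0 ^ x)
      = (1/2) * ∑ d ∈ Finset.range N, myTerm θ0 lam N d := by
    simp only [myTerm]
    rw [hrope, hsplit, Finset.sum_sub_distrib, Finset.mul_sum, ← Finset.mul_sum,
      ← Finset.mul_sum]
    ring
  have hle : ∀ d : ℕ, ((d:ℝ)/N) ≤ (((d:ℝ)+1)/N) := fun d =>
    (div_le_div_iff_of_pos_right hNpos).mpr (by linarith)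
  have hba : ∀ d : ℕ, (((d:ℝ)+1)/N) - ((d:ℝ)/N) = 1/N := by
    intro d; field_simp; ring
  -- trivial bound
  have htriv : ∀ d : ℕ, |myTerm θ0 lam N d| ≤ 2 / N := by
    intro d
    unfold myTerm
    have h := myTrivErr θ0 lam (hle d)
    rw [hba d] at h
    calc _ ≤ 2 * (1/(N:ℝ)) := h
      _ = 2 / N := by ring
  -- Lipschitz bound
  have hlip : ∀ d : ℕ, |myTerm θ0 lam N d|
      ≤ Real.pi * lam * L * θ0 ^ ((d:ℝ)/N) * (1/(N:ℝ))^2 := by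
    intro d
    unfold myTerm
    have h := myIntervalErr h0 h1 hlam0 (hle d) (lam := lam)
    rw [hba d] at h
    rw [hLdef]
    exact h
  -- cutoff
  set K : ℕ := Nat.floor (α * N) with hKdef
  have hKle : (K:ℝ) ≤ α * N := Nat.floor_le (by positivity)
  have hKN : K ≤ N := by
    have hx : (K:ℝ) < (N:ℝ) := lt_of_le_of_lt hKle (by nlinarith)
    exact_mod_cast hx.le
  set r : ℝ := θ0 ^ ((1:ℝ)/(N:ℝ)) with hrdef
  have hr0 : 0 < r := Real.rpow_pos_of_pos h0 _
  have hr1 : r < 1 := Real.rpow_lt_one h0.le h1 (by positivity)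
  have hpow : ∀ d : ℕ, θ0 ^ ((d:ℝ)/N) = r ^ d := by
    intro d
    rw [hrdef, ← Real.rpow_natCast (θ0 ^ ((1:ℝ)/(N:ℝ))) d, ← Real.rpow_mul h0.le]
    congr 1
    ring
  set t : ℝ := L / N with htdef
  have ht0 : 0 < t := div_pos hL hNpos
  have ht2 : t < 1/2 := by
    rw [htdef, div_lt_iff₀ hNpos]
    rw [hDR] at hD
    linarith
  have hrexp : r = Real.exp (-t) := by
    rw [hrdef, Real.rpow_def_of_pos h0, htdef, hLdef]
    congr 1
    field_simp
  have h1r : (2/3) * t ≤ 1 - r := by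
    have he1 : 1 + t ≤ Real.exp t := by linarith [Real.add_one_le_exp t]
    have hrle : r ≤ 1 / (1 + t) := by
      rw [hrexp, Real.exp_neg, inv_eq_one_div]
      exact one_div_le_one_div_of_le (by linarith) he1
    have hq : 1 / (1 + t) ≤ 1 - (2/3) * t := by
      rw [div_le_iff₀ (by linarith : (0:ℝ) < 1 + t)]
      nlinarith
    linarith
  have hrinv : r⁻¹ ≤ 5/3 := by
    have hh : Real.exp (1/2 : ℝ) < 5/3 := by
      have h9 := Real.exp_one_lt_d9
      have hx : Real.exp (1/2 : ℝ) * Real.exp (1/2 : ℝ) = Real.exp 1 := by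
        rw [← Real.exp_add]; norm_num
      nlinarith [Real.exp_pos (1/2 : ℝ)]
    have hq1 : r⁻¹ = Real.exp t := by rw [hrexp, Real.exp_neg, inv_inv]
    have hq2 : Real.exp t ≤ Real.exp (1/2 : ℝ) := Real.exp_le_exp.mpr (by linarith)
    rw [hq1]
    linarith
  have hrK : r ^ K ≤ (5/3) * θ0 ^ α := by
    have hKoverN : α - 1/(N:ℝ) ≤ (K:ℝ)/N := by
      rw [le_div_iff₀ hNpos]
      have hq := Nat.lt_floor_add_one (α * (N:ℝ))
      rw [← hKdef] at hq
      have hexp : (α - 1/(N:ℝ)) * N = α * N - 1 := by field_simp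
      linarith [hexp.le, hexp.ge]
    have hq1 : θ0 ^ ((K:ℝ)/(N:ℝ)) ≤ θ0 ^ (α - 1/(N:ℝ)) :=
      Real.rpow_le_rpow_of_exponent_ge h0 h1.le hKoverN
    have hq2 : θ0 ^ (α - 1/(N:ℝ)) = θ0 ^ α * r⁻¹ := by
      rw [Real.rpow_sub h0, hrdef, div_eq_mul_inv]
    rw [← hpow K]
    calc θ0 ^ ((K:ℝ)/(N:ℝ)) ≤ θ0 ^ α * r⁻¹ := hq2 ▸ hq1
      _ ≤ θ0 ^ α * (5/3) := mul_le_mul_of_nonneg_left hrinv hθα.le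
      _ = (5/3) * θ0 ^ α := by ring
  have hfac : (0:ℝ) ≤ Real.pi * lam * L * (1/(N:ℝ))^2 :=
    mul_nonneg (mul_nonneg (mul_nonneg Real.pi_pos.le hlam0.le) hL.le) (by positivity)
  have htail : ∑ d ∈ Finset.Ico K N, |myTerm θ0 lam N d|
      ≤ (5/2) * Real.pi * lam * θ0 ^ α / N := by
    have hstep : ∀ d ∈ Finset.Ico K N, |myTerm θ0 lam N d|
        ≤ (Real.pi * lam * L * (1/(N:ℝ))^2) * r ^ d := by
      intro d _
      refine (hlip d).trans (le_of_eq ?_)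
      rw [hpow d]; ring
    calc ∑ d ∈ Finset.Ico K N, |myTerm θ0 lam N d|
        ≤ ∑ d ∈ Finset.Ico K N, (Real.pi * lam * L * (1/(N:ℝ))^2) * r ^ d :=
          Finset.sum_le_sum hstep
      _ = (Real.pi * lam * L * (1/(N:ℝ))^2) * ∑ d ∈ Finset.Ico K N, r ^ d := by
          rw [Finset.mul_sum]
      _ ≤ (Real.pi * lam * L * (1/(N:ℝ))^2) * (r ^ K / (1 - r)) :=
          mul_le_mul_of_nonneg_left (geom_sum_Ico_le_of_lt_one hr0.le hr1) hfac
      _ ≤ (Real.pi * lam * L * (1/(N:ℝ))^2) * (((5/3) * θ0 ^ α) / ((2/3) * t)) := by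
          refine mul_le_mul_of_nonneg_left ?_ hfac
          exact div_le_div₀ (by positivity) hrK (by positivity) h1r
      _ = (5/2) * Real.pi * lam * θ0 ^ α / N := by
          rw [htdef]
          field_simp
  have hhead : ∑ d ∈ Finset.Ico 0 K, |myTerm θ0 lam N d| ≤ 2 * α := by
    calc ∑ d ∈ Finset.Ico 0 K, |myTerm θ0 lam N d|
        ≤ ∑ _d ∈ Finset.Ico 0 K, 2/(N:ℝ) := Finset.sum_le_sum (fun d _ => htriv d)
      _ = (K:ℝ) * (2/(N:ℝ)) := by
          rw [Finset.sum_const, Nat.card_Ico, Nat.sub_zero, nsmul_eq_mul]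
      _ ≤ (α * (N:ℝ)) * (2/(N:ℝ)) := mul_le_mul_of_nonneg_right hKle (by positivity)
      _ = 2 * α := by field_simp
  have hsum : ∑ d ∈ Finset.range N, |myTerm θ0 lam N d|
      ≤ 2 * α + (5/2) * Real.pi * lam * θ0 ^ α / N := by
    rw [Finset.range_eq_Ico, ← Finset.sum_Ico_consecutive _ (Nat.zero_le K) hKN]
    exact add_le_add hhead htail
  rw [hdiff, abs_mul, abs_of_nonneg (by norm_num : (0:ℝ) ≤ 1/2)]
  have habs2 : |∑ d ∈ Finset.range N, myTerm θ0 lam N d|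
      ≤ ∑ d ∈ Finset.range N, |myTerm θ0 lam N d| := Finset.abs_sum_le_sum_abs _ _
  have hX : 0 < Real.pi * lam * θ0 ^ α / N :=
    div_pos (mul_pos (mul_pos Real.pi_pos hlam0) hθα) hNpos
  have hfin : (1/2) * |∑ d ∈ Finset.range N, myTerm θ0 lam N d|
      ≤ α + (5/4) * (Real.pi * lam * θ0 ^ α / N) := by
    have := mul_le_mul_of_nonneg_left (habs2.trans hsum) (by norm_num : (0:ℝ) ≤ 1/2)
    calc (1/2) * |∑ d ∈ Finset.range N, myTerm θ0 lam N d|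
        ≤ (1/2) * (2 * α + (5/2) * Real.pi * lam * θ0 ^ α / N) := this
      _ = α + (5/4) * (Real.pi * lam * θ0 ^ α / N) := by ring
  have hgoal : α + (5/4) * (Real.pi * lam * θ0 ^ α / N)
      ≤ α + 4 * Real.pi * lam * θ0 ^ α / (D:ℝ) := by
    rw [hDR]
    have h2N : 4 * Real.pi * lam * θ0 ^ α / (2 * (N:ℝ))
        = 2 * (Real.pi * lam * θ0 ^ α / N) := by
      field_simp
      ring
    rw [h2N]
    nlinarith
  exact hfin.trans hgoal
end

section
/- Let θ0 ∈ (0, 1/10), let D be an even positive integer with D > 4·|log θ0|, let λ > 1 be real, and let α ∈ (0,1). Then | S_D(λ) − (1/2)·∫_0^1 sin(2πλ·θ0^x) dx | ≤ α + 4πλ·θ0^α/D. -/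
open Real Filter Finset

set_option maxHeartbeats 1000000

lemma stmt9_sin_lip (u v : ℝ) : |Real.sin u - Real.sin v| ≤ |u - v| := by
  rw [Real.sin_sub_sin, abs_mul, abs_mul, abs_two]
  have h1 : |Real.sin ((u-v)/2)| ≤ |(u-v)/2| := Real.abs_sin_le_abs
  have h2 : |Real.cos ((u+v)/2)| ≤ 1 := Real.abs_cos_le_one _
  have h3 : |(u-v)/2| = |u-v|/2 := by rw [abs_div, abs_two]
  nlinarith [abs_nonneg (Real.sin ((u-v)/2)), abs_nonneg (Real.cos ((u+v)/2)),
    abs_nonneg (u-v)]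

/-- Riemann-sum approximation estimate for the sine sum (`|Δ/2| ≤ ε(D; λ, θ0, α)`
in the proof of the `S_D` part of Lemma D.1). -/
theorem stmt9 (θ0 : ℝ) (hθ0 : θ0 ∈ Set.Ioo (0 : ℝ) (1 / 10))
    (D : ℕ) (hDeven : Even D) (hD : (D : ℝ) > 4 * |Real.log θ0|)
    (lam : ℝ) (hlam : 1 < lam) (α : ℝ) (hα : α ∈ Set.Ioo (0 : ℝ) 1) :
    |ropeS D θ0 lam - (1 / 2) * ∫ x in (0 : ℝ)..1, Real.sin (2 * Real.pi * lam * θ0 ^ x)|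
      ≤ α + 4 * Real.pi * lam * θ0 ^ α / D := by
  obtain ⟨hθa, hθb⟩ := hθ0
  obtain ⟨hαa, hαb⟩ := hα
  have hθ1 : θ0 < 1 := by linarith
  have hπ := Real.pi_pos
  have hlam0 : (0:ℝ) < lam := by linarith
  have hlog : Real.log θ0 < 0 := Real.log_neg hθa hθ1
  set L : ℝ := -Real.log θ0 with hLdef
  have hL : 0 < L := by simp only [hLdef]; linarith
  have habsL : |Real.log θ0| = L := abs_of_neg hlog
  rw [habsL] at hD
  have hDpos : (0:ℝ) < D := by nlinarith
  have hDnat : 0 < D := by exact_mod_cast hDpos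
  set N := D / 2 with hNdef
  have hDN : (D:ℝ) = 2 * (N:ℝ) := by exact_mod_cast (Nat.two_mul_div_two_of_even hDeven).symm
  have hNpos : (0:ℝ) < N := by linarith
  set f : ℝ → ℝ := fun x => Real.sin (2 * Real.pi * lam * θ0 ^ x) with hfdef
  have hcont : Continuous f := by
    apply Real.continuous_sin.comp
    exact continuous_const.mul (continuous_const.rpow continuous_id fun x => Or.inl hθa.ne')
  set a : ℕ → ℝ := fun i => 2 * (i:ℝ) / (D:ℝ) with hadef
  have hstep : ∀ i : ℕ, a (i+1) - a i = 2 / D := by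
    intro i; simp only [hadef]; push_cast; field_simp; ring
  have hmono : ∀ i : ℕ, a i ≤ a (i+1) := by
    intro i
    have h := hstep i
    have : (0:ℝ) < 2 / D := by positivity
    linarith
  have ha0 : a 0 = 0 := by simp [hadef]
  have haN : a N = 1 := by
    simp only [hadef]; rw [hDN]; field_simp
  have hint : ∀ i : ℕ, IntervalIntegrable f MeasureTheory.volume (a i) (a (i+1)) :=
    fun i => hcont.intervalIntegrable _ _
  have hsplit : ∑ d ∈ Finset.range N, ∫ x in a d..a (d+1), f x = ∫ x in (0:ℝ)..1, f x := by
    rw [← ha0, ← haN]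
    exact intervalIntegral.sum_integral_adjacent_intervals fun k _ => hint k
  have key : ropeS D θ0 lam - (1/2) * ∫ x in (0:ℝ)..1, f x
      = ∑ d ∈ Finset.range N, ((1:ℝ)/2) * ∫ x in a d..a (d+1), (f (a d) - f x) := by
    rw [← hsplit]
    simp only [ropeS]
    rw [← hNdef, Finset.mul_sum, Finset.mul_sum, ← Finset.sum_sub_distrib]
    refine Finset.sum_congr rfl fun d _ => ?_
    rw [intervalIntegral.integral_sub (intervalIntegrable_const) (hint d),
        intervalIntegral.integral_const, smul_eq_mul, hstep d]
    show (1:ℝ)/D * f (a d) - 1/2 * ∫ x in a d..a (d+1), f x = _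
    ring
  -- geometric ratio
  set r : ℝ := θ0 ^ ((2:ℝ)/D) with hrdef
  have hr_pos : 0 < r := Real.rpow_pos_of_pos hθa _
  have hr1 : r < 1 := Real.rpow_lt_one hθa.le hθ1 (by positivity)
  have hrd : ∀ d : ℕ, θ0 ^ (a d) = r ^ d := by
    intro d
    rw [hrdef, show a d = (2:ℝ)/D * (d:ℝ) by simp only [hadef]; ring,
      Real.rpow_mul hθa.le, Real.rpow_natCast]
  -- head bound
  have hhead : ∀ d : ℕ, |(1:ℝ)/2 * ∫ x in a d..a (d+1), (f (a d) - f x)| ≤ 2 / D := by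
    intro d
    have hb : ‖∫ x in a d..a (d+1), (f (a d) - f x)‖ ≤ 2 * |a (d+1) - a d| := by
      refine intervalIntegral.norm_integral_le_of_norm_le_const fun x _ => ?_
      have h1 : |f (a d)| ≤ 1 := Real.abs_sin_le_one _
      have h2 : |f x| ≤ 1 := Real.abs_sin_le_one _
      calc ‖f (a d) - f x‖ ≤ ‖f (a d)‖ + ‖f x‖ := norm_sub_le _ _
        _ ≤ 2 := by rw [Real.norm_eq_abs, Real.norm_eq_abs]; linarith
    rw [Real.norm_eq_abs] at hb
    rw [hstep d, abs_of_nonneg (by positivity : (0:ℝ) ≤ 2/D)] at hb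
    rw [abs_mul]
    have : |(1:ℝ)/2| = 1/2 := by norm_num
    rw [this]
    linarith
  -- tail bound
  have htail : ∀ d : ℕ, |(1:ℝ)/2 * ∫ x in a d..a (d+1), (f (a d) - f x)|
      ≤ (2*Real.pi*lam*L/(D:ℝ)^2) * r ^ d := by
    intro d
    have hAB : a d ≤ a (d+1) := hmono d
    have hBA : a (d+1) - a d = 2/D := hstep d
    have hA0 : 0 < θ0 ^ (a d) := Real.rpow_pos_of_pos hθa _
    have hpt : ∀ x ∈ Set.Icc (a d) (a (d+1)),
        |f (a d) - f x| ≤ (2*Real.pi*lam*L*θ0^(a d)) * (x - a d) := by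
      intro x hx
      refine (stmt9_sin_lip _ _).trans ?_
      have hxA : θ0 ^ x ≤ θ0 ^ (a d) := Real.rpow_le_rpow_of_exponent_ge hθa hθ1.le hx.1
      have habs2 : |2*Real.pi*lam*θ0^(a d) - 2*Real.pi*lam*θ0^x|
          = 2*Real.pi*lam*(θ0^(a d) - θ0^x) := by
        rw [abs_of_nonneg]; · ring
        nlinarith [mul_nonneg (show (0:ℝ) ≤ 2*Real.pi*lam by positivity) (sub_nonneg.2 hxA)]
      rw [habs2]
      have hsplit2 : θ0 ^ x = θ0 ^ (a d) * θ0 ^ (x - a d) := by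
        rw [← Real.rpow_add hθa]; ring_nf
      have hbound : 1 - θ0 ^ (x - a d) ≤ L * (x - a d) := by
        have h := Real.add_one_le_exp (Real.log θ0 * (x - a d))
        rw [← Real.rpow_def_of_pos hθa] at h
        rw [hLdef]; nlinarith
      calc 2*Real.pi*lam*(θ0^(a d) - θ0^x)
          = 2*Real.pi*lam*θ0^(a d)*(1 - θ0^(x - a d)) := by rw [hsplit2]; ring
        _ ≤ 2*Real.pi*lam*θ0^(a d)*(L*(x - a d)) :=
            mul_le_mul_of_nonneg_left hbound (by positivity)
        _ = (2*Real.pi*lam*L*θ0^(a d)) * (x - a d) := by ring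
    have hstep1 : |∫ x in a d..a (d+1), (f (a d) - f x)|
        ≤ ∫ x in a d..a (d+1), |f (a d) - f x| :=
      intervalIntegral.abs_integral_le_integral_abs hAB
    have hstep2 : ∫ x in a d..a (d+1), |f (a d) - f x|
        ≤ ∫ x in a d..a (d+1), (2*Real.pi*lam*L*θ0^(a d)) * (x - a d) := by
      refine intervalIntegral.integral_mono_on hAB ?_ ?_ hpt
      · exact ((continuous_const.sub hcont).abs).intervalIntegrable _ _
      · exact (continuous_const.mul (continuous_id.sub continuous_const)).intervalIntegrable _ _
    have hstep3 : ∫ x in a d..a (d+1), (2*Real.pi*lam*L*θ0^(a d)) * (x - a d)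
        = (2*Real.pi*lam*L*θ0^(a d)) * ((a (d+1) - a d)^2/2) := by
      rw [intervalIntegral.integral_const_mul]
      congr 1
      have : ∫ x in a d..a (d+1), (x - a d)
          = (a (d+1)^2 - (a d)^2)/2 - (a (d+1) - a d) * a d := by
        rw [intervalIntegral.integral_sub intervalIntegral.intervalIntegrable_id
          (intervalIntegrable_const), integral_id, intervalIntegral.integral_const, smul_eq_mul]
      rw [this]; ring
    rw [abs_mul, show |(1:ℝ)/2| = 1/2 by norm_num]
    calc (1:ℝ)/2 * |∫ x in a d..a (d+1), (f (a d) - f x)|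
        ≤ 1/2 * ((2*Real.pi*lam*L*θ0^(a d)) * ((a (d+1) - a d)^2/2)) := by
          refine mul_le_mul_of_nonneg_left ?_ (by norm_num)
          exact hstep1.trans (hstep2.trans_eq hstep3)
      _ = (2*Real.pi*lam*L/(D:ℝ)^2) * r ^ d := by
          rw [hBA, hrd d]; field_simp
  -- the cut index
  set k := ⌊α * N⌋₊ with hkdef
  have hkN : k ≤ N := by
    have h1 : α * (N:ℝ) < N := by nlinarith
    have : k < N := (Nat.floor_lt (by positivity)).mpr h1
    exact this.le
  have hkα : (k:ℝ) ≤ α * N := Nat.floor_le (by positivity)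
  have hk1 : α * (N:ℝ) < k + 1 := Nat.lt_floor_add_one _
  -- exp facts
  set t : ℝ := 2*L/D with htdef
  have ht0 : 0 < t := by positivity
  have ht2 : t < 1/2 := by rw [htdef, div_lt_iff₀ hDpos]; linarith
  have hre : r = Real.exp (-t) := by
    rw [hrdef, Real.rpow_def_of_pos hθa, htdef, hLdef]; congr 1; field_simp
  have hrexp : r * Real.exp t = 1 := by rw [hre, ← Real.exp_add]; simp
  have hexp1 : 1 + t ≤ Real.exp t := by linarith [Real.add_one_le_exp t]
  have hr_half : 1/2 ≤ r := by
    have := Real.add_one_le_exp (-t)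
    rw [← hre] at this; linarith
  have hF1 : r * t ≤ 1 - r := by nlinarith
  have hDt : (D:ℝ) * t = 2 * L := by rw [htdef]; field_simp
  have hmain : L * D ≤ 2 * ((D:ℝ)^2 * (r*(1-r))) := by
    have h1 : (D:ℝ) * (r * t) ≤ D * (1 - r) := by nlinarith
    have h2 : 2 * L * r ≤ (D:ℝ) * (1 - r) := by nlinarith
    have hr2 : 1 ≤ 4*r^2 := by nlinarith
    nlinarith [mul_le_mul_of_nonneg_left h2 (show (0:ℝ) ≤ 2*D*r by positivity),
      mul_le_mul_of_nonneg_left hr2 (show (0:ℝ) ≤ L*D by positivity)]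
  -- geometric sum bound
  have hθα : 0 < θ0 ^ α := Real.rpow_pos_of_pos hθa _
  have hrk : r ^ k * r ≤ θ0 ^ α := by
    have h1 : r ^ k * r = θ0 ^ (a (k+1)) := by
      rw [hrd (k+1)]; ring
    rw [h1]
    refine Real.rpow_le_rpow_of_exponent_ge hθa hθ1.le ?_
    simp only [hadef]
    push_cast
    rw [hDN, le_div_iff₀ (by positivity : (0:ℝ) < 2*N)]
    nlinarith
  have hsum : ∑ d ∈ Finset.Ico k N, r ^ d ≤ θ0 ^ α / (r * (1 - r)) := by
    rw [geom_sum_Ico' hr1.ne hkN]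
    have h1r : 0 < 1 - r := by linarith
    have e1 : r ^ k - r ^ N ≤ θ0 ^ α / r := by
      have h2 : r ^ k ≤ θ0 ^ α / r := (le_div_iff₀ hr_pos).mpr hrk
      nlinarith [pow_nonneg hr_pos.le N]
    calc (r ^ k - r ^ N) / (1 - r) ≤ (θ0 ^ α / r) / (1 - r) := by gcongr
      _ = θ0 ^ α / (r * (1 - r)) := by rw [div_div, mul_comm]
  -- assembly
  rw [key]
  refine le_trans (Finset.abs_sum_le_sum_abs _ _) ?_
  rw [Finset.range_eq_Ico, ← Finset.sum_Ico_consecutive _ (Nat.zero_le k) hkN]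
  refine add_le_add ?_ ?_
  · calc ∑ d ∈ Finset.Ico 0 k, |(1:ℝ)/2 * ∫ x in a d..a (d+1), (f (a d) - f x)|
        ≤ ∑ _d ∈ Finset.Ico 0 k, 2/(D:ℝ) := Finset.sum_le_sum fun d _ => hhead d
      _ = (k:ℝ) * (2/D) := by
          rw [Finset.sum_const, Nat.card_Ico, Nat.sub_zero, nsmul_eq_mul]
      _ ≤ α := by
          rw [hDN]
          have heq : (k:ℝ) * (2/(2*N)) = k/N := by field_simp
          rw [heq, div_le_iff₀ hNpos]
          linarith
  · calc ∑ d ∈ Finset.Ico k N, |(1:ℝ)/2 * ∫ x in a d..a (d+1), (f (a d) - f x)|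
        ≤ ∑ d ∈ Finset.Ico k N, (2*Real.pi*lam*L/(D:ℝ)^2) * r ^ d :=
          Finset.sum_le_sum fun d _ => htail d
      _ = (2*Real.pi*lam*L/(D:ℝ)^2) * ∑ d ∈ Finset.Ico k N, r ^ d := by
          rw [Finset.mul_sum]
      _ ≤ (2*Real.pi*lam*L/(D:ℝ)^2) * (θ0 ^ α / (r * (1 - r))) :=
          mul_le_mul_of_nonneg_left hsum (by positivity)
      _ ≤ 4 * Real.pi * lam * θ0 ^ α / D := by
          have hpos2 : (0:ℝ) < (D:ℝ)^2 * (r * (1 - r)) :=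
            mul_pos (by positivity) (mul_pos hr_pos (by linarith))
          rw [div_mul_div_comm, div_le_div_iff₀ hpos2 hDpos]
          linarith [mul_le_mul_of_nonneg_left hmain
            (show (0:ℝ) ≤ 2*Real.pi*lam*θ0^α by positivity)]
end

section
/- Let θ0 ∈ (0, 1/10) and let λ > 1 be real. Then | ∫_{λθ0}^{λ} cos(2πy)/y dy | ≤ 4/(λ·θ0). -/
open Real

/-- Oscillatory-integral bound for the cosine integral in Lemma D.1. -/
theorem stmt10 (θ0 : ℝ) (hθ0 : θ0 ∈ Set.Ioo (0 : ℝ) (1 / 10)) (lam : ℝ) (hlam : 1 < lam) :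
    |∫ y in (lam * θ0)..lam, Real.cos (2 * Real.pi * y) / y| ≤ 4 / (lam * θ0) := by
  obtain ⟨hθp, hθlt⟩ := hθ0
  have hlam0 : (0:ℝ) < lam := by linarith
  set a : ℝ := lam * θ0 with ha_def
  have ha : 0 < a := mul_pos hlam0 hθp
  have hab : a < lam := by nlinarith
  have hIcc : Set.uIcc a lam = Set.Icc a lam := Set.uIcc_of_le hab.le
  have hne : ∀ y ∈ Set.uIcc a lam, y ≠ 0 := by
    intro y hy
    rw [hIcc] at hy
    exact ne_of_gt (lt_of_lt_of_le ha hy.1)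
  have hπ : (0:ℝ) < π := Real.pi_pos
  have hainv : (0:ℝ) < a⁻¹ := inv_pos.mpr ha
  have hlinv : (0:ℝ) < lam⁻¹ := inv_pos.mpr hlam0
  have hle : lam⁻¹ ≤ a⁻¹ := (inv_le_inv₀ hlam0 ha).mpr hab.le
  -- derivative facts
  have hu : ∀ y ∈ Set.uIcc a lam, HasDerivAt (fun x : ℝ => x⁻¹) (-(y^2)⁻¹) y := by
    intro y hy
    simpa using hasDerivAt_inv (hne y hy)
  have hv : ∀ y : ℝ, HasDerivAt (fun x : ℝ => Real.sin (2*π*x) / (2*π))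
      (Real.cos (2*π*y)) y := by
    intro y
    have h1 : HasDerivAt (fun x : ℝ => 2*π*x) (2*π) y := by
      simpa using (hasDerivAt_id y).const_mul (2*π)
    have h2 := (Real.hasDerivAt_sin (2*π*y)).comp y h1
    have h3 := h2.div_const (2*π)
    have heq : Real.cos (2*π*y) * (2*π) / (2*π) = Real.cos (2*π*y) := by
      field_simp
    simpa [heq] using h3
  have hu'int : IntervalIntegrable (fun y : ℝ => -(y^2)⁻¹) MeasureTheory.volume a lam := by
    apply ContinuousOn.intervalIntegrable
    apply ContinuousOn.neg
    apply ContinuousOn.inv₀ (continuousOn_pow 2)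
    intro y hy
    exact pow_ne_zero 2 (hne y hy)
  have hv'int : IntervalIntegrable (fun y : ℝ => Real.cos (2*π*y)) MeasureTheory.volume a lam :=
    (Real.continuous_cos.comp (continuous_const.mul continuous_id)).intervalIntegrable a lam
  have key := intervalIntegral.integral_mul_deriv_eq_deriv_mul hu
    (fun y _ => hv y) hu'int hv'int
  have hcongr : (∫ y in a..lam, Real.cos (2*π*y) / y)
      = ∫ y in a..lam, y⁻¹ * Real.cos (2*π*y) := by
    apply intervalIntegral.integral_congr
    intro y hy
    simp [div_eq_inv_mul]
  -- remainder integral bound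
  have hgint : IntervalIntegrable (fun y : ℝ => (y^2)⁻¹ / (2*π)) MeasureTheory.volume a lam := by
    apply ContinuousOn.intervalIntegrable
    apply ContinuousOn.div_const
    apply ContinuousOn.inv₀ (continuousOn_pow 2)
    intro y hy
    exact pow_ne_zero 2 (hne y hy)
  have hgval : (∫ y in a..lam, (y^2)⁻¹ / (2*π)) = (-(lam)⁻¹ / (2*π)) - (-(a)⁻¹ / (2*π)) := by
    apply intervalIntegral.integral_eq_sub_of_hasDerivAt
    · intro y hy
      have := ((hasDerivAt_inv (hne y hy)).neg).div_const (2*π)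
      simpa using this
    · exact hgint
  have hrem : |∫ y in a..lam, -(y^2)⁻¹ * (Real.sin (2*π*y) / (2*π))| ≤ a⁻¹ / (2*π) := by
    have hb1 : ‖∫ y in a..lam, -(y^2)⁻¹ * (Real.sin (2*π*y) / (2*π))‖
        ≤ |∫ y in a..lam, (y^2)⁻¹ / (2*π)| := by
      apply intervalIntegral.norm_integral_le_abs_of_norm_le _ hgint
      filter_upwards with t
      have ht2 : (0:ℝ) ≤ (t^2)⁻¹ := by positivity
      have hs : |Real.sin (2*π*t) / (2*π)| ≤ 1 / (2*π) := by
        rw [abs_div, abs_of_pos (by positivity : (0:ℝ) < 2*π)]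
        apply div_le_div_of_nonneg_right (abs_sin_le_one _) (by positivity)
      calc ‖-(t^2)⁻¹ * (Real.sin (2*π*t) / (2*π))‖
          = (t^2)⁻¹ * |Real.sin (2*π*t) / (2*π)| := by
            rw [Real.norm_eq_abs, abs_mul, abs_neg, abs_inv,
              abs_of_nonneg (sq_nonneg t)]
        _ ≤ (t^2)⁻¹ * (1/(2*π)) := by
            exact mul_le_mul_of_nonneg_left hs ht2
        _ = (t^2)⁻¹ / (2*π) := by ring
    rw [hgval] at hb1
    calc ‖∫ y in a..lam, -(y^2)⁻¹ * (Real.sin (2*π*y) / (2*π))‖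
        ≤ |(-(lam)⁻¹ / (2*π)) - (-(a)⁻¹ / (2*π))| := hb1
      _ = (a⁻¹ - lam⁻¹) / (2*π) := by
          rw [show (-(lam)⁻¹ / (2*π)) - (-(a)⁻¹ / (2*π)) = (a⁻¹ - lam⁻¹) / (2*π) from by ring,
            abs_of_nonneg (div_nonneg (by linarith) (by positivity))]
      _ ≤ a⁻¹ / (2*π) := by
          apply div_le_div_of_nonneg_right (by linarith) (by positivity)
  -- boundary terms
  have hbdy : ∀ c : ℝ, 0 < c → |c⁻¹ * (Real.sin (2*π*c) / (2*π))| ≤ c⁻¹ / (2*π) := by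
    intro c hc
    rw [abs_mul, abs_inv, abs_of_pos hc, abs_div, abs_of_pos (by positivity : (0:ℝ) < 2*π)]
    calc c⁻¹ * (|Real.sin (2*π*c)| / (2*π))
        ≤ c⁻¹ * (1 / (2*π)) := by
          apply mul_le_mul_of_nonneg_left _ (inv_pos.mpr hc).le
          exact div_le_div_of_nonneg_right (abs_sin_le_one _) (by positivity)
      _ = c⁻¹ / (2*π) := by ring
  -- assemble
  rw [hcongr, key]
  have h1 := hbdy lam hlam0
  have h2 := hbdy a ha
  have habs : |lam⁻¹ * (Real.sin (2*π*lam) / (2*π)) - a⁻¹ * (Real.sin (2*π*a) / (2*π))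
      - ∫ y in a..lam, -(y^2)⁻¹ * (Real.sin (2*π*y) / (2*π))|
      ≤ lam⁻¹ / (2*π) + a⁻¹ / (2*π) + a⁻¹ / (2*π) := by
    calc |lam⁻¹ * (Real.sin (2*π*lam) / (2*π)) - a⁻¹ * (Real.sin (2*π*a) / (2*π))
        - ∫ y in a..lam, -(y^2)⁻¹ * (Real.sin (2*π*y) / (2*π))|
        ≤ |lam⁻¹ * (Real.sin (2*π*lam) / (2*π)) - a⁻¹ * (Real.sin (2*π*a) / (2*π))|
          + |∫ y in a..lam, -(y^2)⁻¹ * (Real.sin (2*π*y) / (2*π))| := abs_sub _ _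
      _ ≤ (|lam⁻¹ * (Real.sin (2*π*lam) / (2*π))| + |a⁻¹ * (Real.sin (2*π*a) / (2*π))|)
          + |∫ y in a..lam, -(y^2)⁻¹ * (Real.sin (2*π*y) / (2*π))| := by
            gcongr
            exact abs_sub _ _
      _ ≤ lam⁻¹ / (2*π) + a⁻¹ / (2*π) + a⁻¹ / (2*π) :=
            add_le_add (add_le_add h1 h2) hrem
  refine habs.trans ?_
  have hπ3 : (3:ℝ) < π := Real.pi_gt_three
  rw [div_eq_mul_inv 4 a]
  have h3 : lam⁻¹ / (2*π) + a⁻¹ / (2*π) + a⁻¹ / (2*π) ≤ 3 * a⁻¹ / (2*π) := by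
    have h : lam⁻¹ / (2*π) ≤ a⁻¹ / (2*π) :=
      div_le_div_of_nonneg_right hle (by positivity)
    rw [show 3 * a⁻¹ / (2*π) = a⁻¹/(2*π) + a⁻¹/(2*π) + a⁻¹/(2*π) from by ring]
    linarith
  refine h3.trans ?_
  rw [div_le_iff₀ (by positivity : (0:ℝ) < 2*π)]
  nlinarith [mul_pos hainv hπ]
end

section
/- For every integer n ≥ 1: | ∫_{(4n+1)/4}^{(4n+5)/4} cos(2πy)/y dy | ≤ 1/(π·n²). -/
open Real

/-- Period-pair cancellation estimate for the cosine integral (Lemma D.1). -/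
theorem stmt12 (n : ℕ) (hn : 1 ≤ n) :
    |∫ y in (((4 * (n : ℝ) + 1) / 4))..((4 * (n : ℝ) + 5) / 4),
        Real.cos (2 * Real.pi * y) / y| ≤ 1 / (Real.pi * (n : ℝ) ^ 2) := by
  have hπ := Real.pi_pos
  have hn1 : (1:ℝ) ≤ (n:ℝ) := by exact_mod_cast hn
  set a : ℝ := (4 * (n : ℝ) + 1) / 4 with ha
  set c : ℝ := (4 * (n : ℝ) + 5) / 4 with hc
  have hna : (n:ℝ) ≤ a := by rw [ha]; linarith
  have hac : a ≤ c := by rw [ha, hc]; linarith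
  have hnpos : (0:ℝ) < (n:ℝ) := by linarith
  have hapos : (0:ℝ) < a := lt_of_lt_of_le hnpos hna
  have hmem : ∀ y ∈ Set.uIcc a c, (0:ℝ) < y := by
    intro y hy
    rw [Set.uIcc_of_le hac] at hy
    exact lt_of_lt_of_le hapos hy.1
  set u : ℝ → ℝ := fun y => Real.sin (2 * Real.pi * y) / (2 * Real.pi) with hu
  set v : ℝ → ℝ := fun y => y⁻¹ with hv
  have hu' : ∀ y : ℝ, HasDerivAt u (Real.cos (2 * Real.pi * y)) y := by
    intro y
    have h1 : HasDerivAt (fun y : ℝ => Real.sin (2 * Real.pi * y))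
        (Real.cos (2 * Real.pi * y) * (2 * Real.pi)) y := by
      have := (Real.hasDerivAt_sin (2 * Real.pi * y)).comp y
        ((hasDerivAt_id y).const_mul (2 * Real.pi))
      simpa [Function.comp_def, mul_comm] using this
    have h2 := h1.div_const (2 * Real.pi)
    simpa [hu, mul_div_assoc, mul_div_cancel_right₀ _ (by positivity : (2 * Real.pi) ≠ 0)]
      using h2
  have hv' : ∀ y ∈ Set.Ioo (min a c) (max a c), HasDerivAt v (-((y:ℝ)^2)⁻¹) y := by
    intro y hy
    rw [min_eq_left hac, max_eq_right hac] at hy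
    have hy0 : y ≠ 0 := ne_of_gt (lt_trans hapos hy.1)
    simpa [hv] using hasDerivAt_inv hy0
  have hucont : Continuous u :=
    (Real.continuous_sin.comp (continuous_const.mul continuous_id)).div_const _
  have hcontu : ContinuousOn u (Set.uIcc a c) := hucont.continuousOn
  have hcontv : ContinuousOn v (Set.uIcc a c) := by
    intro y hy
    exact (continuousAt_inv₀ (ne_of_gt (hmem y hy))).continuousWithinAt
  have hcont2 : ContinuousOn (fun y : ℝ => -((y:ℝ)^2)⁻¹) (Set.uIcc a c) := by
    intro y hy
    have : ((y:ℝ)^2) ≠ 0 := pow_ne_zero 2 (ne_of_gt (hmem y hy))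
    exact (((continuous_pow 2).continuousAt.inv₀ this).neg).continuousWithinAt
  have hIu : IntervalIntegrable (fun y => Real.cos (2 * Real.pi * y)) MeasureTheory.volume a c := by
    exact (Real.continuous_cos.comp (continuous_const.mul continuous_id)).intervalIntegrable _ _
  have hIv : IntervalIntegrable (fun y => -((y:ℝ)^2)⁻¹) MeasureTheory.volume a c :=
    hcont2.intervalIntegrable
  have hibp := intervalIntegral.integral_deriv_mul_eq_sub_of_hasDerivAt hcontu hcontv
    (fun x _ => hu' x) hv' hIu hIv
  have hsina : Real.sin (2 * Real.pi * a) = 1 := by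
    have h : 2 * Real.pi * a = Real.pi / 2 + (n:ℝ) * (2 * Real.pi) := by rw [ha]; ring
    rw [h, Real.sin_add_nat_mul_two_pi, Real.sin_pi_div_two]
  have hsinc : Real.sin (2 * Real.pi * c) = 1 := by
    have h : 2 * Real.pi * c = Real.pi / 2 + ((n + 1 : ℕ) : ℝ) * (2 * Real.pi) := by
      push_cast; rw [hc]; ring
    rw [h, Real.sin_add_nat_mul_two_pi, Real.sin_pi_div_two]
  have hI1 : IntervalIntegrable (fun y => Real.cos (2 * Real.pi * y) * v y)
      MeasureTheory.volume a c :=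
    (((Real.continuous_cos.comp (continuous_const.mul continuous_id)).continuousOn).mul hcontv).intervalIntegrable
  have hI2 : IntervalIntegrable (fun y => u y * -((y:ℝ)^2)⁻¹) MeasureTheory.volume a c :=
    ((hucont.continuousOn).mul hcont2).intervalIntegrable
  have hsplit : (∫ y in a..c, Real.cos (2 * Real.pi * y) * v y)
      = (u c * v c - u a * v a) - ∫ y in a..c, u y * -((y:ℝ)^2)⁻¹ := by
    rw [← hibp, intervalIntegral.integral_add hI1 hI2]; ring
  have heq : (∫ y in a..c, Real.cos (2 * Real.pi * y) / y)
      = (∫ y in a..c, Real.cos (2 * Real.pi * y) * v y) := by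
    apply intervalIntegral.integral_congr
    intro y hy
    rw [hv]; exact div_eq_mul_inv _ _
  -- bound the boundary term
  have hn2pos : (0:ℝ) < (n:ℝ)^2 := by positivity
  have hbound1 : |u c * v c - u a * v a| ≤ 1 / (2 * Real.pi * (n:ℝ)^2) := by
    have hvals : u c * v c - u a * v a = (1 / (2 * Real.pi)) * (c⁻¹ - a⁻¹) := by
      rw [hu, hv]; simp only [hsina, hsinc]; ring
    have hsub : a⁻¹ - c⁻¹ = (a * c)⁻¹ := by
      have hc1 : c = a + 1 := by rw [ha, hc]; ring
      rw [hc1, inv_sub_inv (ne_of_gt hapos) (by linarith : a + 1 ≠ 0)]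
      ring
    have hcpos : (0:ℝ) < c := lt_of_lt_of_le hapos hac
    have hle : (a * c)⁻¹ ≤ ((n:ℝ)^2)⁻¹ := by
      apply inv_anti₀ hn2pos
      nlinarith
    have hciv : c⁻¹ ≤ a⁻¹ := inv_anti₀ hapos hac
    rw [hvals, abs_mul, abs_of_pos (by positivity : (0:ℝ) < 1 / (2 * Real.pi)),
      abs_of_nonpos (by linarith : c⁻¹ - a⁻¹ ≤ 0)]
    have : -(c⁻¹ - a⁻¹) = (a * c)⁻¹ := by rw [← hsub]; ring
    rw [this]
    rw [div_mul_eq_mul_div, one_mul, div_le_div_iff₀ (by positivity) (by positivity)]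
    calc (a * c)⁻¹ * (2 * Real.pi * (n:ℝ)^2) ≤ ((n:ℝ)^2)⁻¹ * (2 * Real.pi * (n:ℝ)^2) := by
          apply mul_le_mul_of_nonneg_right hle (by positivity)
      _ = 1 * (2 * Real.pi) := by field_simp
  -- bound the remainder integral
  have hbound2 : |∫ y in a..c, u y * -((y:ℝ)^2)⁻¹| ≤ 1 / (2 * Real.pi * (n:ℝ)^2) := by
    have hC : ∀ y ∈ Set.uIoc a c, ‖u y * -((y:ℝ)^2)⁻¹‖ ≤ 1 / (2 * Real.pi * (n:ℝ)^2) := by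
      intro y hy
      rw [Set.uIoc_of_le hac] at hy
      have hyn : (n:ℝ) ≤ y := le_trans hna (le_of_lt hy.1)
      have hypos : (0:ℝ) < y := lt_of_lt_of_le hnpos hyn
      rw [Real.norm_eq_abs, abs_mul, abs_neg, abs_inv, abs_of_pos (by positivity : (0:ℝ) < y^2)]
      have h1 : |u y| ≤ 1 / (2 * Real.pi) := by
        rw [hu, abs_div, abs_of_pos (by positivity : (0:ℝ) < 2 * Real.pi)]
        gcongr
        exact Real.abs_sin_le_one _
      have h2 : ((y:ℝ)^2)⁻¹ ≤ ((n:ℝ)^2)⁻¹ := by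
        apply inv_anti₀ hn2pos
        nlinarith
      calc |u y| * (y^2)⁻¹ ≤ (1 / (2 * Real.pi)) * ((n:ℝ)^2)⁻¹ := by
            apply mul_le_mul h1 h2 (by positivity) (by positivity)
        _ = 1 / (2 * Real.pi * (n:ℝ)^2) := by field_simp
    have := intervalIntegral.norm_integral_le_of_norm_le_const hC
    have hca : |c - a| = 1 := by rw [ha, hc]; rw [abs_of_nonneg] <;> [ring_nf; linarith]
    rw [Real.norm_eq_abs] at this
    calc |∫ y in a..c, u y * -((y:ℝ)^2)⁻¹| ≤ 1 / (2 * Real.pi * (n:ℝ)^2) * |c - a| := this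
      _ = 1 / (2 * Real.pi * (n:ℝ)^2) := by rw [hca, mul_one]
  calc |∫ y in a..c, Real.cos (2 * Real.pi * y) / y|
      = |(u c * v c - u a * v a) - ∫ y in a..c, u y * -((y:ℝ)^2)⁻¹| := by rw [heq, hsplit]
    _ ≤ |u c * v c - u a * v a| + |∫ y in a..c, u y * -((y:ℝ)^2)⁻¹| := abs_sub _ _
    _ ≤ 1 / (2 * Real.pi * (n:ℝ)^2) + 1 / (2 * Real.pi * (n:ℝ)^2) := add_le_add hbound1 hbound2
    _ = 1 / (Real.pi * (n:ℝ)^2) := by field_simp; ring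
end

section
/- For every integer n ≥ 0: | ∫_{(2n+1)/2}^{(2n+3)/2} sin(2πy)/y dy | ≤ 4/(π·(2n+1)·(2n+3)). -/
/-!
Split the period at the integer `k = n + 1`. On `[k - 1/2, k]` the numerator `sin (2πy)` is
nonpositive with integral `-1/π`, and on `[k, k + 1/2]` it is nonnegative with integral `1/π`.
Since `1/y` is squeezed between its endpoint values on each half, the first half contributes a
value in `[-1/(π(k - 1/2)), -1/(πk)]` and the second one in `[1/(π(k + 1/2)), 1/(πk)]`: the
`±1/(πk)` cancel, and the sum lies in `[-(1/(π(k - 1/2)) - 1/(π(k + 1/2))), 0]`.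
-/

open Real Set intervalIntegral

lemma IntervalIntegrable.div_id {f : ℝ → ℝ} {p q : ℝ} (hp : 0 < p) (hpq : p ≤ q)
    (hf : IntervalIntegrable f MeasureTheory.volume p q) :
    IntervalIntegrable (fun y => f y / y) MeasureTheory.volume p q := by
  have hinv : ContinuousOn (fun y : ℝ => y⁻¹) (uIcc p q) := by
    refine continuousOn_inv₀.mono fun y hy => ?_
    rw [uIcc_of_le hpq] at hy
    exact (hp.trans_le hy.1).ne'
  simpa only [div_eq_mul_inv] using hf.mul_continuousOn hinv

lemma integral_div_mem_Icc_of_nonneg {f : ℝ → ℝ} {p q : ℝ} (hp : 0 < p) (hpq : p ≤ q)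
    (hf : IntervalIntegrable f MeasureTheory.volume p q) (hf0 : ∀ y ∈ Icc p q, 0 ≤ f y) :
    ∫ y in p..q, f y / y ∈ Icc ((∫ y in p..q, f y) / q) ((∫ y in p..q, f y) / p) := by
  have hdiv := hf.div_id hp hpq
  rw [← integral_div, ← integral_div]
  constructor
  · refine integral_mono_on hpq (hf.div_const q) hdiv fun y hy => ?_
    exact div_le_div_of_nonneg_left (hf0 y hy) (hp.trans_le hy.1) hy.2
  · refine integral_mono_on hpq hdiv (hf.div_const p) fun y hy => ?_
    exact div_le_div_of_nonneg_left (hf0 y hy) hp hy.1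

lemma integral_div_mem_Icc_of_nonpos {f : ℝ → ℝ} {p q : ℝ} (hp : 0 < p) (hpq : p ≤ q)
    (hf : IntervalIntegrable f MeasureTheory.volume p q) (hf0 : ∀ y ∈ Icc p q, f y ≤ 0) :
    ∫ y in p..q, f y / y ∈ Icc ((∫ y in p..q, f y) / p) ((∫ y in p..q, f y) / q) := by
  have h := integral_div_mem_Icc_of_nonneg hp hpq hf.neg fun y hy => neg_nonneg.mpr (hf0 y hy)
  simp only [Pi.neg_apply, neg_div, integral_neg, mem_Icc, neg_le_neg_iff] at h
  exact h.symm

lemma sin_two_pi_mul_nonneg_of_mem_Icc {k : ℤ} {y : ℝ} (hy : y ∈ Icc (k : ℝ) (k + 1 / 2)) :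
    0 ≤ sin (2 * π * y) := by
  rw [← sin_sub_int_mul_two_pi _ k]
  exact sin_nonneg_of_nonneg_of_le_pi (by nlinarith [pi_pos, hy.1]) (by nlinarith [pi_pos, hy.2])

lemma sin_two_pi_mul_nonpos_of_mem_Icc {k : ℤ} {y : ℝ} (hy : y ∈ Icc ((k : ℝ) - 1 / 2) k) :
    sin (2 * π * y) ≤ 0 := by
  rw [← sin_sub_int_mul_two_pi _ k]
  exact sin_nonpos_of_nonpos_of_neg_pi_le (by nlinarith [pi_pos, hy.2])
    (by nlinarith [pi_pos, hy.1])

lemma integral_sin_two_pi_mul (p q : ℝ) :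
    ∫ y in p..q, sin (2 * π * y) = (cos (2 * π * p) - cos (2 * π * q)) / (2 * π) := by
  rw [integral_comp_mul_left sin (by positivity : 2 * π ≠ 0), integral_sin, smul_eq_mul,
    inv_mul_eq_div]

lemma integral_sin_two_pi_mul_sub_half (k : ℤ) :
    ∫ y in (k - 1 / 2 : ℝ)..k, sin (2 * π * y) = -(1 / π) := by
  rw [integral_sin_two_pi_mul, show 2 * π * ((k : ℝ) - 1 / 2) = k * (2 * π) - π by ring,
    mul_comm (2 * π), cos_int_mul_two_pi_sub_pi, cos_int_mul_two_pi]
  field_simp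
  norm_num

lemma integral_sin_two_pi_mul_add_half (k : ℤ) :
    ∫ y in (k : ℝ)..(k + 1 / 2), sin (2 * π * y) = 1 / π := by
  rw [integral_sin_two_pi_mul, show 2 * π * ((k : ℝ) + 1 / 2) = k * (2 * π) + π by ring,
    mul_comm (2 * π), cos_int_mul_two_pi_add_pi, cos_int_mul_two_pi]
  field_simp
  norm_num

lemma abs_integral_sin_two_pi_mul_div_le {k : ℤ} (hk : 0 < k) :
    |∫ y in (k - 1 / 2 : ℝ)..(k + 1 / 2), sin (2 * π * y) / y|
      ≤ 1 / π / (k - 1 / 2) - 1 / π / (k + 1 / 2) := by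
  have hpos : (0 : ℝ) < k - 1 / 2 := by
    have : (1 : ℝ) ≤ k := by exact_mod_cast hk
    linarith
  have hsin : Continuous fun y : ℝ => sin (2 * π * y) := by fun_prop
  have hleft := integral_div_mem_Icc_of_nonpos hpos (by linarith) (hsin.intervalIntegrable _ _)
    fun y hy => sin_two_pi_mul_nonpos_of_mem_Icc hy
  have hright := integral_div_mem_Icc_of_nonneg (by linarith) (by linarith)
    (hsin.intervalIntegrable _ _) fun y hy => sin_two_pi_mul_nonneg_of_mem_Icc hy
  rw [integral_sin_two_pi_mul_sub_half, neg_div, neg_div] at hleft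
  rw [integral_sin_two_pi_mul_add_half] at hright
  rw [← integral_add_adjacent_intervals (b := (k : ℝ))
    ((hsin.intervalIntegrable _ _).div_id hpos (by linarith))
    ((hsin.intervalIntegrable _ _).div_id (by linarith) (by linarith)), abs_le]
  have hgap : 0 ≤ 1 / π / (k - 1 / 2) - 1 / π / (k + 1 / 2) := by
    rw [sub_nonneg]
    exact div_le_div_of_nonneg_left (by positivity) hpos (by linarith)
  constructor <;> linarith [hleft.1, hleft.2, hright.1, hright.2]

/-- Period-pair cancellation estimate for the sine integral (Lemma D.1). -/
theorem stmt13 (n : ℕ) :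
    |∫ y in (((2 * (n : ℝ) + 1) / 2))..((2 * (n : ℝ) + 3) / 2),
        Real.sin (2 * Real.pi * y) / y|
      ≤ 4 / (Real.pi * (2 * (n : ℝ) + 1) * (2 * (n : ℝ) + 3)) := by
  have h := abs_integral_sin_two_pi_mul_div_le (k := n + 1) (by positivity)
  push_cast at h
  rw [show (n : ℝ) + 1 - 1 / 2 = (2 * n + 1) / 2 by ring,
    show (n : ℝ) + 1 + 1 / 2 = (2 * n + 3) / 2 by ring] at h
  refine h.trans_eq ?_
  field_simp
  ring
end

section
/- Let θ0 ∈ (0,1), λ > 0, and ε0 ∈ (0,1) be reals with λ·θ0^{ε0} ≤ 1/4. Then ∫_{λθ0}^{1/4} cos(2πy)/y dy ≥ (1 − ε0)·|log θ0|·cos(2πλ·θ0^{ε0}). -/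
/-!
On `[λθ₀, λθ₀^ε₀]` the numerator `cos (2πy)` is at least its value at the right endpoint, and
`∫ dy / y` over that interval is `log (θ₀^ε₀ / θ₀) = (1 - ε₀) |log θ₀|`. On the rest of the
interval `[λθ₀^ε₀, 1/4]` the integrand is nonnegative.
-/

open Real Set MeasureTheory

lemma pos_of_mem_uIcc {a b y : ℝ} (ha : 0 < a) (hb : 0 < b) (hy : y ∈ uIcc a b) : 0 < y :=
  (lt_min ha hb).trans_le hy.1

lemma intervalIntegrable_div_self {g : ℝ → ℝ} (hg : Continuous g) {a b : ℝ}
    (ha : 0 < a) (hb : 0 < b) : IntervalIntegrable (fun y => g y / y) volume a b :=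
  (hg.continuousOn.div continuousOn_id fun _ hy =>
    (pos_of_mem_uIcc ha hb hy).ne').intervalIntegrable

lemma mul_log_div_le_integral_div_self {f : ℝ → ℝ} {a b m : ℝ} (ha : 0 < a) (hab : a ≤ b)
    (hf : IntervalIntegrable (fun y => f y / y) volume a b) (hm : ∀ y ∈ Icc a b, m ≤ f y) :
    m * log (b / a) ≤ ∫ y in a..b, f y / y := by
  have hb : 0 < b := ha.trans_le hab
  have hconst : ∫ y in a..b, m / y = m * log (b / a) := by
    simp only [div_eq_mul_inv, intervalIntegral.integral_const_mul, integral_inv_of_pos ha hb]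
  rw [← hconst]
  refine intervalIntegral.integral_mono_on hab
    (intervalIntegrable_div_self continuous_const ha hb) hf fun y hy => ?_
  exact div_le_div_of_nonneg_right (hm y hy) (ha.trans_le hy.1).le

lemma cos_two_pi_mul_nonneg {y : ℝ} (hy₀ : 0 ≤ y) (hy : y ≤ 1 / 4) : 0 ≤ cos (2 * π * y) :=
  cos_nonneg_of_mem_Icc ⟨by nlinarith [pi_pos], by nlinarith [pi_pos]⟩

lemma cos_two_pi_mul_le_of_le {y c : ℝ} (hy₀ : 0 ≤ y) (hyc : y ≤ c) (hc : c ≤ 1 / 2) :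
    cos (2 * π * c) ≤ cos (2 * π * y) :=
  cos_le_cos_of_nonneg_of_le_pi (by positivity) (by nlinarith [pi_pos])
    (by nlinarith [pi_pos])

lemma integral_cos_two_pi_mul_div_self_nonneg {c : ℝ} (hc : 0 < c) (hc4 : c ≤ 1 / 4) :
    0 ≤ ∫ y in c..(1 / 4), cos (2 * π * y) / y :=
  intervalIntegral.integral_nonneg hc4 fun _ hy =>
    div_nonneg (cos_two_pi_mul_nonneg (hc.le.trans hy.1) hy.2) (hc.le.trans hy.1)

lemma log_rpow_div_self {θ ε : ℝ} (hθ : 0 < θ) (hθ1 : θ ≤ 1) :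
    log (θ ^ ε / θ) = (1 - ε) * |log θ| := by
  rw [← rpow_sub_one hθ.ne', log_rpow hθ, abs_of_nonpos (log_nonpos hθ.le hθ1)]
  ring

/-- Key lower bound (9.3) in the proof of Lemma D.2. -/
theorem stmt14 (θ0 : ℝ) (hθ0 : θ0 ∈ Set.Ioo (0 : ℝ) 1) (lam : ℝ) (hlam : 0 < lam)
    (ε0 : ℝ) (hε0 : ε0 ∈ Set.Ioo (0 : ℝ) 1) (hsmall : lam * θ0 ^ ε0 ≤ 1 / 4) :
    (∫ y in (lam * θ0)..(1 / 4), Real.cos (2 * Real.pi * y) / y)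
      ≥ (1 - ε0) * |Real.log θ0| * Real.cos (2 * Real.pi * lam * θ0 ^ ε0) := by
  obtain ⟨hθ, hθ1⟩ := hθ0
  set c := lam * θ0 ^ ε0
  have ha : 0 < lam * θ0 := mul_pos hlam hθ
  have hc : 0 < c := mul_pos hlam (rpow_pos_of_pos hθ ε0)
  have hac : lam * θ0 ≤ c := mul_le_mul_of_nonneg_left
    (by simpa using rpow_le_rpow_of_exponent_ge hθ hθ1.le hε0.2.le) hlam.le
  have hleft :
      cos (2 * π * c) * log (c / (lam * θ0)) ≤ ∫ y in (lam * θ0)..c, cos (2 * π * y) / y :=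
    mul_log_div_le_integral_div_self ha hac
      (intervalIntegrable_div_self (by fun_prop) ha hc)
      fun y hy => cos_two_pi_mul_le_of_le (ha.le.trans hy.1) hy.2 (by linarith)
  rw [mul_div_mul_left _ _ hlam.ne', log_rpow_div_self hθ hθ1.le] at hleft
  rw [← intervalIntegral.integral_add_adjacent_intervals
    (intervalIntegrable_div_self (by fun_prop) ha hc)
    (intervalIntegrable_div_self (by fun_prop) hc (by norm_num)), mul_assoc (2 * π)]
  linarith [integral_cos_two_pi_mul_div_self_nonneg hc hsmall]
end

section
/- For every real λ > 1: | ∫_{1/4}^{λ} cos(2πy)/y dy | ≤ 2. -/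
open Real

/-- Estimate (9.2) in the proof of Lemma D.2. -/
theorem stmt15 (lam : ℝ) (hlam : 1 < lam) :
    |∫ y in (1 / 4 : ℝ)..lam, Real.cos (2 * Real.pi * y) / y| ≤ 2 := by
  have hpi : (3:ℝ) < π := by linarith [Real.pi_gt_three]
  have h14 : (1/4:ℝ) ≤ lam := by linarith
  have huIcc : Set.uIcc (1/4:ℝ) lam = Set.Icc (1/4) lam := Set.uIcc_of_le h14
  have hpos : ∀ y ∈ Set.uIcc (1/4:ℝ) lam, 0 < y := by
    intro y hy
    rw [huIcc] at hy
    linarith [hy.1]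
  set f : ℝ → ℝ := fun y => Real.sin (2*π*y) / (2*π*y) with hf
  have hderiv : ∀ y ∈ Set.uIcc (1/4:ℝ) lam,
      HasDerivAt f (Real.cos (2*π*y)/y - Real.sin (2*π*y)/(2*π*y^2)) y := by
    intro y hy
    have hy0 : y ≠ 0 := (hpos y hy).ne'
    have h1 : HasDerivAt (fun y : ℝ => Real.sin (2*π*y)) (Real.cos (2*π*y) * (2*π)) y := by
      have := (Real.hasDerivAt_sin (2*π*y)).comp y ((hasDerivAt_id y).const_mul (2*π))
      exact this.congr_deriv (by simp)
    have h2 : HasDerivAt (fun y : ℝ => 2*π*y) (2*π) y := by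
      simpa using (hasDerivAt_id y).const_mul (2*π)
    have h3 := h1.div h2 (by positivity)
    refine h3.congr_deriv ?_
    have hπ : (π:ℝ) ≠ 0 := Real.pi_ne_zero
    field_simp
  -- continuity/integrability
  have hc1 : ContinuousOn (fun y : ℝ => Real.cos (2*π*y) / y) (Set.uIcc (1/4) lam) := by
    apply ContinuousOn.div
    · exact (Real.continuous_cos.comp (continuous_const.mul continuous_id)).continuousOn
    · exact continuousOn_id
    · intro y hy; exact (hpos y hy).ne'
  have hc2 : ContinuousOn (fun y : ℝ => Real.sin (2*π*y) / (2*π*y^2)) (Set.uIcc (1/4) lam) := by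
    apply ContinuousOn.div
    · exact (Real.continuous_sin.comp (continuous_const.mul continuous_id)).continuousOn
    · exact (continuous_const.mul (continuous_pow 2)).continuousOn
    · intro y hy
      have := hpos y hy
      positivity
  have hi1 : IntervalIntegrable (fun y : ℝ => Real.cos (2*π*y) / y) MeasureTheory.volume (1/4) lam :=
    hc1.intervalIntegrable
  have hi2 : IntervalIntegrable (fun y : ℝ => Real.sin (2*π*y) / (2*π*y^2)) MeasureTheory.volume (1/4) lam :=
    hc2.intervalIntegrable
  have key : (∫ y in (1/4:ℝ)..lam, (Real.cos (2*π*y)/y - Real.sin (2*π*y)/(2*π*y^2)))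
      = f lam - f (1/4) :=
    intervalIntegral.integral_eq_sub_of_hasDerivAt hderiv (hi1.sub hi2)
  have hsplit : (∫ y in (1/4:ℝ)..lam, Real.cos (2*π*y)/y)
      = (f lam - f (1/4)) + ∫ y in (1/4:ℝ)..lam, Real.sin (2*π*y)/(2*π*y^2) := by
    rw [← key, intervalIntegral.integral_sub hi1 hi2]
    ring
  -- bound the remainder integral
  have hmono : ContinuousOn (fun y : ℝ => 1/(2*π*y^2)) (Set.uIcc (1/4) lam) := by
    apply ContinuousOn.div continuousOn_const
    · exact (continuous_const.mul (continuous_pow 2)).continuousOn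
    · intro y hy
      have := hpos y hy
      positivity
  have hi3 : IntervalIntegrable (fun y : ℝ => 1/(2*π*y^2)) MeasureTheory.volume (1/4) lam :=
    hmono.intervalIntegrable
  have hderivG : ∀ y ∈ Set.uIcc (1/4:ℝ) lam,
      HasDerivAt (fun y : ℝ => -(1/(2*π*y))) (1/(2*π*y^2)) y := by
    intro y hy
    have hy0 : y ≠ 0 := (hpos y hy).ne'
    have h2 : HasDerivAt (fun y : ℝ => 2*π*y) (2*π) y := by
      simpa using (hasDerivAt_id y).const_mul (2*π)
    have h3 := ((hasDerivAt_const y (1:ℝ)).div h2 (by positivity)).neg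
    refine h3.congr_deriv ?_
    have hπ : (π:ℝ) ≠ 0 := Real.pi_ne_zero
    field_simp
    ring
  have hGval : (∫ y in (1/4:ℝ)..lam, 1/(2*π*y^2))
      = (-(1/(2*π*lam))) - (-(1/(2*π*(1/4)))) :=
    intervalIntegral.integral_eq_sub_of_hasDerivAt hderivG hi3
  have hrem : |∫ y in (1/4:ℝ)..lam, Real.sin (2*π*y)/(2*π*y^2)| ≤ 2/π := by
    have hiabs : IntervalIntegrable (fun y : ℝ => |Real.sin (2*π*y)/(2*π*y^2)|)
        MeasureTheory.volume (1/4) lam := hi2.abs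
    have habs : |∫ y in (1/4:ℝ)..lam, Real.sin (2*π*y)/(2*π*y^2)|
        ≤ ∫ y in (1/4:ℝ)..lam, 1/(2*π*y^2) := by
      refine (intervalIntegral.abs_integral_le_integral_abs h14).trans ?_
      apply intervalIntegral.integral_mono_on h14 hiabs hi3
      intro y hy
      have hy0 : 0 < y := by linarith [hy.1]
      rw [abs_div, abs_of_pos (by positivity : (0:ℝ) < 2*π*y^2)]
      gcongr
      exact Real.abs_sin_le_one _
    have hlam0 : 0 < lam := by linarith
    have : (∫ y in (1/4:ℝ)..lam, 1/(2*π*y^2)) ≤ 2/π := by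
      rw [hGval]
      have h1 : 0 < 1/(2*π*lam) := by positivity
      have h2 : -(1/(2*π*(1/4:ℝ))) = -(2/π) := by
        field_simp; ring
      rw [h2]
      linarith
    linarith [abs_nonneg (∫ y in (1/4:ℝ)..lam, Real.sin (2*π*y)/(2*π*y^2))]
  -- bound boundary terms
  have hflam : |f lam| ≤ 1/(2*π) := by
    have hlam0 : 0 < lam := by linarith
    rw [hf, abs_div, abs_of_pos (by positivity : (0:ℝ) < 2*π*lam)]
    calc |Real.sin (2*π*lam)| / (2*π*lam) ≤ 1 / (2*π*lam) := by
          gcongr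
          exact Real.abs_sin_le_one _
      _ ≤ 1/(2*π) := by
          apply div_le_div_of_nonneg_left (by norm_num) (by positivity)
          nlinarith
  have hf14 : |f (1/4)| ≤ 2/π := by
    rw [hf, abs_div, abs_of_pos (by positivity : (0:ℝ) < 2*π*(1/4:ℝ))]
    calc |Real.sin (2*π*(1/4:ℝ))| / (2*π*(1/4:ℝ)) ≤ 1 / (2*π*(1/4:ℝ)) := by
          gcongr
          exact Real.abs_sin_le_one _
      _ = 2/π := by field_simp; ring
  rw [hsplit]
  have h2π : 1/(2*π) + 2/π + 2/π ≤ 2 := by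
    have he : 1/(2*π) + 2/π + 2/π = 9/(2*π) := by field_simp; ring
    rw [he, div_le_iff₀ (by positivity)]
    nlinarith
  calc |(f lam - f (1/4)) + ∫ y in (1/4:ℝ)..lam, Real.sin (2*π*y)/(2*π*y^2)|
      ≤ |f lam| + |f (1/4)| + |∫ y in (1/4:ℝ)..lam, Real.sin (2*π*y)/(2*π*y^2)| := by
        have ha := abs_add_le (f lam - f (1/4)) (∫ y in (1/4:ℝ)..lam, Real.sin (2*π*y)/(2*π*y^2))
        have hb := abs_sub (f lam) (f (1/4))
        linarith
    _ ≤ 1/(2*π) + 2/π + 2/π := by linarith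
    _ ≤ 2 := h2π
end
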